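/- Let f : ℝ → ℝ be a continuous probability density and define g : ℝⁿ → ℝⁿ on the open set {a₁ < a₂ < ⋯ < aₙ} by g_j(α) = a_j ∫_{m_{j-1}}^{m_j} f(x) dx − ∫_{m_{j-1}}^{m_j} x f(x) dx, with m₀ = -∞, mₙ = ∞, m_j = (a_j+a_{j+1})/2. Then g is differentiable and its Jacobian matrix J is symmetric tridiagonal, with off-diagonal entries J_{j,j+1} = J_{j+1,j} = −f(m_j)·(a_{j+1}−a_j)/4 for 1 ≤ j ≤ n−1. -/

import Mathlib

/-!
On sorted points the cell of `a_j` is `(m_{j-1}, m_j]`, so the integral of `h` over it is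
`H(m_j) - H(m_{j-1})` with `H t = ∫_{-∞}^t h`; by the fundamental theorem of calculus it moves with
each midpoint at rate `± h(m)/2`. Since `g_j(a) = ∫_{cell} (a_j - x) f(x) dx`, moving `a_{j+1}` in
`g_j` shifts only the right end `m_j` and gives `(a_j - m_j) f(m_j)/2`, while moving `a_j` in
`g_{j+1}` shifts only its left end `m_j` and gives `-(a_{j+1} - m_j) f(m_j)/2`; both equal
`-f(m_j)(a_{j+1} - a_j)/4`. Coordinates at distance at least two do not enter `g_j` at all.
-/

open MeasureTheory

/-- The Voronoi interval of the `j`-th point of `v : Fin n → ℝ` (for sorted `v`):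
`(m_{j-1}, m_j]` with midpoints `m_j = (v j + v (j+1))/2`, `m₀ = -∞`, `mₙ = ∞`. -/
def voronoiCell (n : ℕ) (v : Fin n → ℝ) (j : Fin n) : Set ℝ :=
  {x | (∀ j' : Fin n, (j' : ℕ) + 1 = (j : ℕ) → (v j' + v j) / 2 < x) ∧
       (∀ j' : Fin n, (j : ℕ) + 1 = (j' : ℕ) → x ≤ (v j + v j') / 2)}

/-- The nonlinear map `g` whose roots are the self-consistent sets:
`g_j(v) = v_j ∫_{m_{j-1}}^{m_j} f − ∫_{m_{j-1}}^{m_j} x f`. -/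
noncomputable def gfun (n : ℕ) (f : ℝ → ℝ) (v : Fin n → ℝ) (j : Fin n) : ℝ :=
  v j * (∫ x in voronoiCell n v j, f x) - ∫ x in voronoiCell n v j, x * f x

open Set Filter Topology Function

theorem hasDerivAt_setIntegral_Iic {E : Type*} [NormedAddCommGroup E] [NormedSpace ℝ E]
    [CompleteSpace E] {h : ℝ → E} (hc : Continuous h) (hi : Integrable h) (t : ℝ) :
    HasDerivAt (fun s => ∫ x in Iic s, h x) (h t) t := by
  have hsplit : (fun s => ∫ x in Iic s, h x) = fun s => (∫ x in Iic t, h x) + ∫ x in t..s, h x := by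
    funext s
    rw [← intervalIntegral.integral_Iic_sub_Iic hi.integrableOn hi.integrableOn, add_sub_cancel]
  rw [hsplit]
  exact (intervalIntegral.integral_hasDerivAt_right hi.intervalIntegrable
    (hc.stronglyMeasurableAtFilter _ _) hc.continuousAt).const_add _

section Pi

variable {𝕜 ι E : Type*} [NontriviallyNormedField 𝕜] [Fintype ι] [DecidableEq ι]
  [NormedAddCommGroup E] [NormedSpace 𝕜 E] {F : (ι → 𝕜) → E} {v : ι → 𝕜}

theorem fderiv_apply_single_of_hasDerivAt_update (hF : DifferentiableAt 𝕜 F v) {k : ι} {a : E}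
    (h : HasDerivAt (fun t => F (update v k t)) a (v k)) :
    fderiv 𝕜 F v (Pi.single k 1) = a := by
  have hline := hF.hasFDerivAt.comp_hasDerivAt_of_eq (v k) (hasDerivAt_update v k (v k))
    (update_eq_self k v).symm
  exact hline.unique h

theorem fderiv_apply_single_eq_zero_of_update {k : ι} (h : ∀ t, F (update v k t) = F v) :
    fderiv 𝕜 F v (Pi.single k 1) = 0 := by
  by_cases hF : DifferentiableAt 𝕜 F v
  · refine fderiv_apply_single_of_hasDerivAt_update hF ?_
    simpa only [h] using hasDerivAt_const (v k) (F v)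
  · rw [fderiv_zero_of_not_differentiableAt hF, zero_apply]

end Pi

theorem StrictMono.eventually_nhds {ι α : Type*} [Finite ι] [Preorder ι] [TopologicalSpace α]
    [LinearOrder α] [OrderClosedTopology α] {v : ι → α} (hv : StrictMono v) :
    ∀ᶠ w in 𝓝 v, StrictMono w := by
  have hpair : ∀ i j, ∀ᶠ w in 𝓝 v, i < j → w i < w j := fun i j => by
    by_cases hij : i < j
    · filter_upwards [(isOpen_lt (continuous_apply i) (continuous_apply j)).mem_nhds
        (show v ∈ {w : ι → α | w i < w j} from hv hij)] with w hw using fun _ => hw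
    · exact Eventually.of_forall fun _ h => absurd h hij
  exact eventually_all.2 fun i => eventually_all.2 fun j => hpair i j

theorem StrictMono.eventually_update {ι α : Type*} [Finite ι] [Preorder ι] [DecidableEq ι]
    [TopologicalSpace α] [LinearOrder α] [OrderClosedTopology α] {v : ι → α} (hv : StrictMono v)
    (k : ι) : ∀ᶠ t in 𝓝 (v k), StrictMono (update v k t) := by
  have hcont : Tendsto (update v k) (𝓝 (v k)) (𝓝 v) := by
    simpa using ((continuous_const (y := v)).update k continuous_id).tendsto (v k)
  exact hcont.eventually hv.eventually_nhds

section Voronoi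

variable {n : ℕ}

/- `voronoiUpTo n w j` is `(-∞, m_j]` (all of `ℝ` for the last point) and `voronoiBefore n w j` is
`(-∞, m_{j-1}]` (empty for the first point). -/
def voronoiUpTo (n : ℕ) (w : Fin n → ℝ) (j : Fin n) : Set ℝ :=
  {x | ∀ j' : Fin n, (j : ℕ) + 1 = (j' : ℕ) → x ≤ (w j + w j') / 2}

def voronoiBefore (n : ℕ) (w : Fin n → ℝ) (j : Fin n) : Set ℝ :=
  {x | ∃ j' : Fin n, (j' : ℕ) + 1 = (j : ℕ) ∧ x ≤ (w j' + w j) / 2}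

theorem voronoiCell_eq_sdiff (w : Fin n → ℝ) (j : Fin n) :
    voronoiCell n w j = voronoiUpTo n w j \ voronoiBefore n w j := by
  ext x
  simp only [voronoiCell, voronoiUpTo, voronoiBefore, Set.mem_sdiff, mem_ofPred_eq, not_exists,
    not_and, not_le]
  tauto

theorem voronoiUpTo_eq_Iic (w : Fin n → ℝ) {j s : Fin n} (hjs : (j : ℕ) + 1 = s) :
    voronoiUpTo n w j = Iic ((w j + w s) / 2) := by
  ext x
  refine ⟨fun hx => hx s hjs, fun hx j' hj' => ?_⟩
  obtain rfl : j' = s := Fin.ext (by omega)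
  exact hx

theorem voronoiUpTo_eq_univ (w : Fin n → ℝ) {j : Fin n} (hj : (j : ℕ) + 1 = n) :
    voronoiUpTo n w j = univ :=
  eq_univ_of_forall fun _ j' hj' => absurd j'.isLt (by omega)

theorem voronoiBefore_eq_Iic (w : Fin n → ℝ) {p j : Fin n} (hpj : (p : ℕ) + 1 = j) :
    voronoiBefore n w j = Iic ((w p + w j) / 2) := by
  ext x
  refine ⟨fun ⟨j', hj', hx⟩ => ?_, fun hx => ⟨p, hpj, hx⟩⟩
  obtain rfl : j' = p := Fin.ext (by omega)
  exact hx

theorem voronoiBefore_eq_empty (w : Fin n → ℝ) {j : Fin n} (hj : (j : ℕ) = 0) :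
    voronoiBefore n w j = ∅ :=
  eq_empty_of_forall_notMem fun _ ⟨_, hj', _⟩ => by omega

theorem voronoiUpTo_update (w : Fin n → ℝ) {j k : Fin n} (hkj : k ≠ j) (hjk : (j : ℕ) + 1 ≠ k)
    (t : ℝ) : voronoiUpTo n (update w k t) j = voronoiUpTo n w j := by
  ext x
  refine forall_congr' fun j' => imp_congr_right fun hj' => ?_
  have hj'k : j' ≠ k := by rintro rfl; exact hjk hj'
  rw [update_of_ne hkj.symm, update_of_ne hj'k]

theorem voronoiBefore_update (w : Fin n → ℝ) {j k : Fin n} (hkj : k ≠ j) (hkj' : (k : ℕ) + 1 ≠ j)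
    (t : ℝ) : voronoiBefore n (update w k t) j = voronoiBefore n w j := by
  ext x
  refine exists_congr fun j' => and_congr_right fun hj' => ?_
  have hj'k : j' ≠ k := by rintro rfl; exact hkj' hj'
  rw [update_of_ne hkj.symm, update_of_ne hj'k]

theorem voronoiBefore_subset_voronoiUpTo {w : Fin n → ℝ} (hw : Monotone w) (j : Fin n) :
    voronoiBefore n w j ⊆ voronoiUpTo n w j := by
  rintro x ⟨p, hpj, hx⟩ s hjs
  have hps : w p ≤ w s := hw (Fin.le_def.2 (by omega))
  linarith

theorem measurableSet_voronoiBefore (w : Fin n → ℝ) (j : Fin n) :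
    MeasurableSet (voronoiBefore n w j) := by
  by_cases hj : (j : ℕ) = 0
  · rw [voronoiBefore_eq_empty w hj]
    exact MeasurableSet.empty
  · obtain ⟨p, hpj⟩ : ∃ p : Fin n, (p : ℕ) + 1 = j := ⟨⟨j - 1, by omega⟩, by simp only; omega⟩
    rw [voronoiBefore_eq_Iic w hpj]
    exact measurableSet_Iic

theorem integral_voronoiCell {h : ℝ → ℝ} (hi : Integrable h) {w : Fin n → ℝ} (hw : Monotone w)
    (j : Fin n) : ∫ x in voronoiCell n w j, h x
      = (∫ x in voronoiUpTo n w j, h x) - ∫ x in voronoiBefore n w j, h x := by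
  rw [voronoiCell_eq_sdiff, setIntegral_sdiff (measurableSet_voronoiBefore w j) hi.integrableOn
    (voronoiBefore_subset_voronoiUpTo hw j)]

end Voronoi

section Calculus

variable {n : ℕ} {h : ℝ → ℝ} {v : Fin n → ℝ}

theorem differentiableAt_integral_voronoiUpTo (hc : Continuous h) (hi : Integrable h)
    (j : Fin n) : DifferentiableAt ℝ (fun w => ∫ x in voronoiUpTo n w j, h x) v := by
  by_cases hj : (j : ℕ) + 1 < n
  · simp_rw [voronoiUpTo_eq_Iic (s := ⟨j + 1, hj⟩) _ rfl]
    exact (hasDerivAt_setIntegral_Iic hc hi _).differentiableAt.comp v (by fun_prop)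
  · simp_rw [voronoiUpTo_eq_univ _ (show (j : ℕ) + 1 = n by omega)]
    exact differentiableAt_const _

theorem differentiableAt_integral_voronoiBefore (hc : Continuous h) (hi : Integrable h)
    (j : Fin n) : DifferentiableAt ℝ (fun w => ∫ x in voronoiBefore n w j, h x) v := by
  by_cases hj : (j : ℕ) = 0
  · simp_rw [voronoiBefore_eq_empty _ hj]
    exact differentiableAt_const _
  · obtain ⟨p, hpj⟩ : ∃ p : Fin n, (p : ℕ) + 1 = j := ⟨⟨j - 1, by omega⟩, by simp only; omega⟩
    simp_rw [voronoiBefore_eq_Iic _ hpj]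
    exact (hasDerivAt_setIntegral_Iic hc hi _).differentiableAt.comp v (by fun_prop)

theorem differentiableAt_integral_voronoiCell (hc : Continuous h) (hi : Integrable h)
    (hv : StrictMono v) (j : Fin n) :
    DifferentiableAt ℝ (fun w => ∫ x in voronoiCell n w j, h x) v := by
  have hsplit : (fun w => (∫ x in voronoiUpTo n w j, h x) - ∫ x in voronoiBefore n w j, h x)
      =ᶠ[𝓝 v] fun w => ∫ x in voronoiCell n w j, h x := by
    filter_upwards [hv.eventually_nhds] with w hw using (integral_voronoiCell hi hw.monotone j).symm
  exact ((differentiableAt_integral_voronoiUpTo hc hi j).sub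
    (differentiableAt_integral_voronoiBefore hc hi j)).congr_of_eventuallyEq hsplit.symm

theorem hasDerivAt_integral_voronoiCell_update_succ (hc : Continuous h) (hi : Integrable h)
    (hv : StrictMono v) {j k : Fin n} (hjk : (j : ℕ) + 1 = k) :
    HasDerivAt (fun t => ∫ x in voronoiCell n (update v k t) j, h x)
      (h ((v j + v k) / 2) / 2) (v k) := by
  have hkj : k ≠ j := by rintro rfl; omega
  have hsplit : (fun t => (∫ x in Iic ((v j + t) / 2), h x) - ∫ x in voronoiBefore n v j, h x)
      =ᶠ[𝓝 (v k)] fun t => ∫ x in voronoiCell n (update v k t) j, h x := by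
    filter_upwards [hv.eventually_update k] with t ht
    rw [integral_voronoiCell hi ht.monotone, voronoiUpTo_eq_Iic _ hjk,
      voronoiBefore_update _ hkj (by omega), update_of_ne hkj.symm, update_self]
  have hmid : HasDerivAt (fun t => (v j + t) / 2) (1 / 2) (v k) :=
    ((hasDerivAt_id _).const_add _).div_const 2
  have := ((hasDerivAt_setIntegral_Iic hc hi _).comp (v k) hmid).sub_const
    (∫ x in voronoiBefore n v j, h x)
  rw [mul_one_div] at this
  exact this.congr_of_eventuallyEq hsplit.symm

theorem hasDerivAt_integral_voronoiCell_update_pred (hc : Continuous h) (hi : Integrable h)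
    (hv : StrictMono v) {j k : Fin n} (hjk : (j : ℕ) + 1 = k) :
    HasDerivAt (fun t => ∫ x in voronoiCell n (update v j t) k, h x)
      (-h ((v j + v k) / 2) / 2) (v j) := by
  have hjk' : j ≠ k := by rintro rfl; omega
  have hsplit : (fun t => (∫ x in voronoiUpTo n v k, h x) - ∫ x in Iic ((t + v k) / 2), h x)
      =ᶠ[𝓝 (v j)] fun t => ∫ x in voronoiCell n (update v j t) k, h x := by
    filter_upwards [hv.eventually_update j] with t ht
    rw [integral_voronoiCell hi ht.monotone, voronoiBefore_eq_Iic _ hjk,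
      voronoiUpTo_update _ hjk' (by omega), update_of_ne hjk'.symm, update_self]
  have hmid : HasDerivAt (fun t => (t + v k) / 2) (1 / 2) (v j) :=
    ((hasDerivAt_id _).add_const _).div_const 2
  have := ((hasDerivAt_setIntegral_Iic hc hi _).comp (v j) hmid).const_sub
    (∫ x in voronoiUpTo n v k, h x)
  rw [mul_one_div, ← neg_div] at this
  exact this.congr_of_eventuallyEq hsplit.symm

end Calculus

section Gfun

variable {n : ℕ} {f : ℝ → ℝ}

theorem gfun_eq_integral (hfi : Integrable f) (hmom : Integrable (fun x => x * f x))
    (w : Fin n → ℝ) (j : Fin n) : gfun n f w j = ∫ x in voronoiCell n w j, (w j - x) * f x := by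
  simp_rw [sub_mul]
  rw [integral_sub (hfi.integrableOn.const_mul _) hmom.integrableOn, integral_const_mul, gfun]

theorem gfun_update_of_two_le {j k : Fin n} (hjk : (j : ℕ) + 2 ≤ k ∨ (k : ℕ) + 2 ≤ j)
    (w : Fin n → ℝ) (t : ℝ) : gfun n f (update w k t) j = gfun n f w j := by
  have hkj : k ≠ j := by rintro rfl; omega
  simp only [gfun, voronoiCell_eq_sdiff, voronoiUpTo_update w hkj (by omega),
    voronoiBefore_update w hkj (by omega), update_of_ne hkj.symm]

theorem differentiableAt_gfun (hf : Continuous f) (hfi : Integrable f)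
    (hmom : Integrable (fun x => x * f x)) {v : Fin n → ℝ} (hv : StrictMono v) (j : Fin n) :
    DifferentiableAt ℝ (fun w => gfun n f w j) v :=
  ((differentiableAt_apply j v).mul (differentiableAt_integral_voronoiCell hf hfi hv j)).sub
    (differentiableAt_integral_voronoiCell (by fun_prop) hmom hv j)

end Gfun

theorem gfun_jacobian_tridiagonal_general (n : ℕ) (f : ℝ → ℝ) (hf : Continuous f)
    (hf1 : ∫ x, f x = 1)
    (hmom : Integrable (fun x => x * f x))
    (v : Fin n → ℝ) (hv : StrictMono v) :
    (∀ j : Fin n, DifferentiableAt ℝ (fun w => gfun n f w j) v) ∧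
    (∀ j k : Fin n, (j : ℕ) + 2 ≤ (k : ℕ) ∨ (k : ℕ) + 2 ≤ (j : ℕ) →
        fderiv ℝ (fun w => gfun n f w j) v (Pi.single k 1) = 0) ∧
    (∀ j k : Fin n, (j : ℕ) + 1 = (k : ℕ) →
        fderiv ℝ (fun w => gfun n f w j) v (Pi.single k 1)
            = -f ((v j + v k) / 2) * (v k - v j) / 4 ∧
        fderiv ℝ (fun w => gfun n f w k) v (Pi.single j 1)
            = -f ((v j + v k) / 2) * (v k - v j) / 4) := by
  have hfi : Integrable f := integrable_of_integral_eq_one hf1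
  have hdiff := differentiableAt_gfun hf hfi hmom hv
  have hcentred : ∀ c, Integrable (fun x => (c - x) * f x) := fun c => by
    simp_rw [sub_mul]
    exact (hfi.const_mul c).sub hmom
  refine ⟨hdiff, fun j k hjk => fderiv_apply_single_eq_zero_of_update (gfun_update_of_two_le hjk v),
    fun j k hjk => ⟨?_, ?_⟩⟩
  · have hkj : k ≠ j := by rintro rfl; omega
    refine fderiv_apply_single_of_hasDerivAt_update (hdiff j) ?_
    simp_rw [gfun_eq_integral hfi hmom, update_of_ne hkj.symm]
    refine (hasDerivAt_integral_voronoiCell_update_succ (by fun_prop) (hcentred (v j)) hv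
      hjk).congr_deriv ?_
    ring
  · have hjk' : j ≠ k := by rintro rfl; omega
    refine fderiv_apply_single_of_hasDerivAt_update (hdiff k) ?_
    simp_rw [gfun_eq_integral hfi hmom, update_of_ne hjk'.symm]
    refine (hasDerivAt_integral_voronoiCell_update_pred (by fun_prop) (hcentred (v k)) hv
      hjk).congr_deriv ?_
    ring

/-- `g` is differentiable at a sorted point and its Jacobian is symmetric tridiagonal, with
off-diagonal entries `J_{j,j+1} = J_{j+1,j} = −f(m_j)(a_{j+1}−a_j)/4`. -/
theorem gfun_jacobian_tridiagonal (n : ℕ) (f : ℝ → ℝ) (hf : Continuous f)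
    (hf0 : ∀ x, 0 ≤ f x) (hf1 : ∫ x, f x = 1)
    (hmom : Integrable (fun x => x * f x))
    (v : Fin n → ℝ) (hv : StrictMono v) :
    (∀ j : Fin n, DifferentiableAt ℝ (fun w => gfun n f w j) v) ∧
    (∀ j k : Fin n, (j : ℕ) + 2 ≤ (k : ℕ) ∨ (k : ℕ) + 2 ≤ (j : ℕ) →
        fderiv ℝ (fun w => gfun n f w j) v (Pi.single k 1) = 0) ∧
    (∀ j k : Fin n, (j : ℕ) + 1 = (k : ℕ) →
        fderiv ℝ (fun w => gfun n f w j) v (Pi.single k 1)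
            = -f ((v j + v k) / 2) * (v k - v j) / 4 ∧
        fderiv ℝ (fun w => gfun n f w k) v (Pi.single j 1)
            = -f ((v j + v k) / 2) * (v k - v j) / 4) :=
  gfun_jacobian_tridiagonal_general n f hf hf1 hmom v hv
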